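/- arXiv:0811.1888 — 2 statements merged into one kernel-verified Lean document; each statement's English description precedes it below -/
import Mathlib

section
/- Let f(t) = (1/6)|t|^{−2/3} · 1_{[−1,1]∖{0}}(t) and let X, X', Y be independent real-valued random variables each with density f. Consider the kernel h(x,y) = 1_{x≥0} + 1_{y≥0}. Then for every ε ∈ (0,2]: E[|h(X,Y) − h(X',Y)| · 1_{|X−X'|≤ε}] ≥ P[X ∈ [0, ε/2]] · P[X' ∈ [−ε/2, 0)] = 4^{−4/3} ε^{2/3}. Consequently, for an i.i.d. sequence (X_n) with marginal density f, the kernel h is not 𝒫-Lipschitz-continuous. -/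
open MeasureTheory ProbabilityTheory Filter Asymptotics Real Topology

noncomputable section

variable {Ω : Type*} [MeasurableSpace Ω]

/-- Strict stationarity of the (1-based) sequence `X₁, X₂, …`. -/
def IsStrictlyStationary (P : Measure Ω) (X : ℕ → Ω → ℝ) : Prop :=
  ∀ k : ℕ,
    P.map (fun ω => fun i : ℕ => X (i + 1 + k) ω) =
      P.map (fun ω => fun i : ℕ => X (i + 1) ω)

/-- Law of `X₁`. -/
def margLaw (P : Measure Ω) (X : ℕ → Ω → ℝ) : Measure ℝ := P.map (X 1)

/-- `θ = ∬ h dF dF`. -/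
def thetaU (P : Measure Ω) (X : ℕ → Ω → ℝ) (h : ℝ → ℝ → ℝ) : ℝ :=
  ∫ x, (∫ y, h x y ∂(margLaw P X)) ∂(margLaw P X)

/-- `h₁` of the Hoeffding decomposition. -/
def hOne (P : Measure Ω) (X : ℕ → Ω → ℝ) (h : ℝ → ℝ → ℝ) (x : ℝ) : ℝ :=
  (∫ y, h x y ∂(margLaw P X)) - thetaU P X h

/-- `h₂` of the Hoeffding decomposition. -/
def hTwo (P : Measure Ω) (X : ℕ → Ω → ℝ) (h : ℝ → ℝ → ℝ) (x y : ℝ) : ℝ :=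
  h x y - hOne P X h x - hOne P X h y - thetaU P X h

/-- Moment condition `(M_p)`. -/
def MomentCond (P : Measure Ω) (X : ℕ → Ω → ℝ) (h : ℝ → ℝ → ℝ) (p M : ℝ) : Prop :=
  (∫ x, (∫ y, |h x y| ^ p ∂(margLaw P X)) ∂(margLaw P X)) ≤ M ∧
    ∀ k : ℕ, (∫ ω, |h (X 1 ω) (X (1 + k) ω)| ^ p ∂P) ≤ M

/-- The bivariate U-statistic `U_n(h)`. -/
def Ustat (X : ℕ → Ω → ℝ) (h : ℝ → ℝ → ℝ) (n : ℕ) (ω : Ω) : ℝ :=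
  (2 / ((n : ℝ) * ((n : ℝ) - 1))) *
    ∑ i ∈ Finset.range n, ∑ j ∈ Finset.range n,
      if i < j then h (X (i + 1) ω) (X (j + 1) ω) else 0

/-- σ-algebra generated by `X₁, …, X_k`. -/
def pastSigma (X : ℕ → Ω → ℝ) (k : ℕ) : MeasurableSpace Ω :=
  MeasurableSpace.comap (fun ω => fun i : Fin k => X (i.1 + 1) ω) inferInstance

/-- σ-algebra generated by `(X_j)_{j ≥ k+m}`. -/
def futSigma (X : ℕ → Ω → ℝ) (k m : ℕ) : MeasurableSpace Ω :=
  MeasurableSpace.comap (fun ω => fun j : ℕ => X (k + m + j) ω) inferInstance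

/-- Absolute regularity (β-mixing) coefficient of the sequence. -/
def betaMix (P : Measure Ω) (X : ℕ → Ω → ℝ) (m : ℕ) : ℝ :=
  ⨆ k : ℕ,
    ∫ ω,
      (⨆ A : {A : Set Ω // MeasurableSet[pastSigma X k] A},
        |(P[Set.indicator A.1 (fun _ => (1 : ℝ))|futSigma X k m]) ω - (P A.1).toReal|) ∂P

/-- Strong mixing (α-mixing) coefficient of the sequence. -/
def alphaMix (P : Measure Ω) (X : ℕ → Ω → ℝ) (m : ℕ) : ℝ :=
  ⨆ k : ℕ,
    sSup {r : ℝ | ∃ A B : Set Ω, MeasurableSet[pastSigma X k] A ∧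
      MeasurableSet[futSigma X k m] B ∧
      r = |(P (A ∩ B)).toReal - (P A).toReal * (P B).toReal|}

/-- The admissible joint laws in the definition of 𝒫-Lipschitz continuity: the law of
`(X₁, X_{1+k})` for some `k ∈ ℕ`, `k ≥ 1`, or the product law `P_{X₁} × P_{X₁}`. -/
def AdmissiblePairLaw (P : Measure Ω) (X : ℕ → Ω → ℝ) (ν : Measure (ℝ × ℝ)) : Prop :=
  (∃ k : ℕ, 1 ≤ k ∧ ν = P.map (fun ω => (X 1 ω, X (1 + k) ω))) ∨
    ν = (margLaw P X).prod (margLaw P X)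

/-- `𝒫`-Lipschitz continuity of a kernel `h` with constant `L`. -/
def PLipschitzWith (P : Measure Ω) (X : ℕ → Ω → ℝ) (h : ℝ → ℝ → ℝ) (L : ℝ) : Prop :=
  ∀ (Ω' : Type) [MeasurableSpace Ω'], ∀ (P' : Measure Ω') (A A' B : Ω' → ℝ),
    IsProbabilityMeasure P' →
    AdmissiblePairLaw P X (P'.map fun ω' => (A ω', B ω')) →
    AdmissiblePairLaw P X (P'.map fun ω' => (A' ω', B ω')) →
    ∀ ε : ℝ, 0 < ε →
      (∫ ω', Set.indicator {ω'' | |A ω'' - A' ω''| ≤ ε}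
          (fun ω'' => |h (A ω'') (B ω'') - h (A' ω'') (B ω'')|) ω' ∂P') ≤ L * ε

/-- The circular block bootstrap sample `X*_i` (for `1 ≤ i ≤ bl`, with `b = ⌊n/l⌋`),
given the choice `j` of the (0-based) starting indices of the `b` blocks. -/
def bootSample (X : ℕ → Ω → ℝ) (n l : ℕ) (j : Fin (n / l) → Fin n) (ω : Ω) (i : ℕ) : ℝ :=
  if hb : 0 < n / l then
    X ((((j ⟨((i - 1) / l) % (n / l), Nat.mod_lt _ hb⟩).1 + (i - 1) % l) % n) + 1) ω
  else 0

/-- Bootstrapped U-statistic `U*_n(h)` for a given choice of blocks `j`. -/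
def UstatBoot (X : ℕ → Ω → ℝ) (h : ℝ → ℝ → ℝ) (n l : ℕ)
    (j : Fin (n / l) → Fin n) (ω : Ω) : ℝ :=
  (2 / (((n / l * l : ℕ) : ℝ) * (((n / l * l : ℕ) : ℝ) - 1))) *
    ∑ i ∈ Finset.range (n / l * l), ∑ i' ∈ Finset.range (n / l * l),
      if i < i' then h (bootSample X n l j ω (i + 1)) (bootSample X n l j ω (i' + 1)) else 0

/-- The bootstrap (conditional) expectation `E*`: the `b = ⌊n/l⌋` blocks are chosen
independently and uniformly among the `n` cyclic blocks. -/
def Estar (n l : ℕ) (g : (Fin (n / l) → Fin n) → ℝ) : ℝ :=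
  (∑ j : Fin (n / l) → Fin n, g j) / (n : ℝ) ^ (n / l)

/-- The bootstrap (conditional) variance `Var*`. -/
def VarStar (n l : ℕ) (g : (Fin (n / l) → Fin n) → ℝ) : ℝ :=
  Estar n l (fun j => g j ^ 2) - Estar n l g ^ 2

/-- The bootstrap (conditional) probability `P*`. -/
def Pstar (n l : ℕ) (q : (Fin (n / l) → Fin n) → Prop) : ℝ :=
  Estar n l (Set.indicator {j | q j} fun _ => (1 : ℝ))

/-- The covariance `Cov(h₁(X₁), h₁(X_{1+k}))`. -/
def hCov (P : Measure Ω) (X : ℕ → Ω → ℝ) (h : ℝ → ℝ → ℝ) (k : ℕ) : ℝ :=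
  (∫ ω, hOne P X h (X 1 ω) * hOne P X h (X (1 + k) ω) ∂P) -
    (∫ ω, hOne P X h (X 1 ω) ∂P) * (∫ ω, hOne P X h (X (1 + k) ω) ∂P)

/-- The long-run variance `σ∞² = Var[h₁(X₁)] + 2 ∑_{k≥1} Cov(h₁(X₁), h₁(X_{1+k}))`. -/
def sigmaInfSq (P : Measure Ω) (X : ℕ → Ω → ℝ) (h : ℝ → ℝ → ℝ) : ℝ :=
  variance (fun ω => hOne P X h (X 1 ω)) P + 2 * ∑' k : ℕ, hCov P X h (k + 1)

end

/-- The density `f(t) = (1/6)|t|^{-2/3} 1_{[-1,1] \\ {0}}(t)`. -/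
noncomputable def cuspDensity : ℝ → ℝ :=
  Set.indicator (Set.Icc (-1 : ℝ) 1 \ {0}) fun t => (1 / 6) * |t| ^ (-(2 : ℝ) / 3)

/-- The law with density `cuspDensity` with respect to Lebesgue measure. -/
noncomputable def cuspLaw : Measure ℝ :=
  MeasureTheory.volume.withDensity fun t => ENNReal.ofReal (cuspDensity t)

/-- The discontinuous kernel `h(x,y) = 1_{x ≥ 0} + 1_{y ≥ 0}`. -/
noncomputable def jumpKernel : ℝ → ℝ → ℝ :=
  fun x y => (if 0 ≤ x then (1 : ℝ) else 0) + (if 0 ≤ y then (1 : ℝ) else 0)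

/-! The kernel jumps across `0` in its first argument, so `|h(X,Y) - h(X',Y)| = 1` as soon as
`X ≥ 0 > X'`, whatever `Y` is; if moreover `X ∈ [0, ε/2]` and `X' ∈ [-ε/2, 0)`, then
`|X - X'| ≤ ε`. By independence and Markov's inequality the 𝒫-Lipschitz expectation is therefore at
least the product of these two probabilities, each equal to `(ε/2)^{1/3}/2` because of the cusp
`|t|^{-2/3}` of the density at `0`. A lower bound of order `ε^{2/3}` beats every `L ε` for small `ε`,
and for an i.i.d. sequence both `(X₁, X₂)` and `(X₃, X₂)` have admissible laws. -/

section

open Set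

lemma jumpKernel_sub_jumpKernel (x x' y : ℝ) :
    jumpKernel x y - jumpKernel x' y = (Ici 0).indicator 1 x - (Ici 0).indicator 1 x' := by
  simp only [jumpKernel, indicator, mem_Ici, Pi.one_apply]
  ring

lemma abs_jumpKernel_sub_le_one (x x' y : ℝ) : |jumpKernel x y - jumpKernel x' y| ≤ 1 := by
  simp only [jumpKernel]
  split_ifs <;> norm_num

lemma abs_jumpKernel_sub_of_nonneg_of_neg {x x' : ℝ} (hx : 0 ≤ x) (hx' : x' < 0) (y : ℝ) :
    |jumpKernel x y - jumpKernel x' y| = 1 := by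
  simp only [jumpKernel, if_pos hx, if_neg (not_le.2 hx')]
  split_ifs <;> norm_num

lemma cuspDensity_neg (t : ℝ) : cuspDensity (-t) = cuspDensity t := by
  have hmem : -t ∈ Icc (-1 : ℝ) 1 \ {0} ↔ t ∈ Icc (-1 : ℝ) 1 \ {0} := by
    simp only [Set.mem_sdiff, mem_Icc, mem_singleton_iff, neg_eq_zero]
    constructor <;> rintro ⟨⟨h1, h2⟩, h3⟩ <;> exact ⟨⟨by linarith, by linarith⟩, h3⟩
  simp only [cuspDensity, indicator_apply, hmem, abs_neg]

lemma cuspLaw_neg (s : Set ℝ) : cuspLaw (-s) = cuspLaw s := by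
  simp only [cuspLaw, withDensity_apply', ← neg_preimage]
  conv_lhs => enter [2, t]; rw [← cuspDensity_neg]
  exact (Measure.measurePreserving_neg volume).setLIntegral_comp_preimage_emb
    (Homeomorph.neg ℝ).measurableEmbedding (fun t => ENNReal.ofReal (cuspDensity t)) s

lemma cuspLaw_singleton (a : ℝ) : cuspLaw {a} = 0 :=
  withDensity_absolutelyContinuous _ _ (Real.volume_singleton)

lemma cuspLaw_Ioc {a : ℝ} (ha : 0 ≤ a) (ha1 : a ≤ 1) :
    cuspLaw (Ioc 0 a) = ENNReal.ofReal (a ^ (1 / 3 : ℝ) / 2) := by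
  have hdens : EqOn (fun t => ENNReal.ofReal (cuspDensity t))
      (fun t => ENNReal.ofReal (1 / 6 * t ^ (-(2 : ℝ) / 3))) (Ioc 0 a) := fun t ⟨ht0, hta⟩ => by
    have hmem : t ∈ Icc (-1 : ℝ) 1 \ {0} := ⟨⟨by linarith, hta.trans ha1⟩, ht0.ne'⟩
    simp only [cuspDensity, indicator_of_mem hmem, abs_of_pos ht0]
  have hint : IntervalIntegrable (fun t : ℝ => 1 / 6 * t ^ (-(2 : ℝ) / 3)) volume 0 a :=
    (intervalIntegral.intervalIntegrable_rpow' (by norm_num)).const_mul _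
  have hnonneg : ∀ t ∈ Ioc 0 a, 0 ≤ 1 / 6 * t ^ (-(2 : ℝ) / 3) := fun t ht =>
    mul_nonneg (by norm_num) (Real.rpow_nonneg ht.1.le _)
  rw [cuspLaw, withDensity_apply _ measurableSet_Ioc,
    setLIntegral_congr_fun measurableSet_Ioc hdens,
    ← ofReal_integral_eq_lintegral_ofReal
      ((intervalIntegrable_iff_integrableOn_Ioc_of_le ha).mp hint)
      (ae_restrict_of_forall_mem measurableSet_Ioc hnonneg),
    ← intervalIntegral.integral_of_le ha, intervalIntegral.integral_const_mul,
    integral_rpow (Or.inl (by norm_num)), Real.zero_rpow (by norm_num)]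
  congr 1
  norm_num
  ring

lemma cuspLaw_Icc {a : ℝ} (ha : 0 ≤ a) (ha1 : a ≤ 1) :
    cuspLaw (Icc 0 a) = ENNReal.ofReal (a ^ (1 / 3 : ℝ) / 2) := by
  rw [← measure_congr (Ioc_ae_eq_Icc' (cuspLaw_singleton 0)), cuspLaw_Ioc ha ha1]

lemma cuspLaw_Ico {a : ℝ} (ha : 0 ≤ a) (ha1 : a ≤ 1) :
    cuspLaw (Ico (-a) 0) = ENNReal.ofReal (a ^ (1 / 3 : ℝ) / 2) := by
  rw [← neg_zero, ← neg_Ioc, cuspLaw_neg, cuspLaw_Ioc ha ha1]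

lemma cuspLaw_real_Icc_mul_cuspLaw_real_Ico {ε : ℝ} (hε : 0 ≤ ε) (hε2 : ε ≤ 2) :
    cuspLaw.real (Icc 0 (ε / 2)) * cuspLaw.real (Ico (-(ε / 2)) 0) =
      (4 : ℝ) ^ (-(4 : ℝ) / 3) * ε ^ ((2 : ℝ) / 3) := by
  have ha : 0 ≤ ε / 2 := by linarith
  have ha1 : ε / 2 ≤ 1 := by linarith
  rw [measureReal_def, measureReal_def, cuspLaw_Icc ha ha1, cuspLaw_Ico ha ha1,
    ENNReal.toReal_ofReal (by positivity)]
  have h4 : (4 : ℝ) ^ (-(4 : ℝ) / 3) = 2 ^ (-(8 : ℝ) / 3) := by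
    rw [show (4 : ℝ) = 2 ^ (2 : ℝ) by norm_num, ← Real.rpow_mul (by norm_num)]
    norm_num
  have h2 : (2 : ℝ) ^ (-(8 : ℝ) / 3) * (2 ^ ((1 : ℝ) / 3) * 2 ^ ((1 : ℝ) / 3)) = 1 / 4 := by
    rw [← Real.rpow_add (by norm_num), ← Real.rpow_add (by norm_num)]
    norm_num
  have hε23 : ε ^ ((2 : ℝ) / 3) = ε ^ ((1 : ℝ) / 3) * ε ^ ((1 : ℝ) / 3) := by
    rw [← Real.rpow_add' hε (by norm_num)]
    norm_num
  have hv : (0 : ℝ) < 2 ^ ((1 : ℝ) / 3) := by positivity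
  rw [h4, Real.div_rpow hε (by norm_num), hε23]
  generalize (2 : ℝ) ^ (-(8 : ℝ) / 3) = w at h2 ⊢
  generalize (2 : ℝ) ^ ((1 : ℝ) / 3) = v at h2 hv ⊢
  field_simp
  linear_combination (-4 * ε ^ ((1 : ℝ) / 3) * ε ^ ((1 : ℝ) / 3)) * h2

lemma measureReal_mul_measureReal_of_map_eq_cuspLaw {Ω : Type*} [MeasurableSpace Ω]
    {P : Measure Ω} {A A' : Ω → ℝ} (hA : Measurable A) (hA' : Measurable A')
    (hlawA : P.map A = cuspLaw) (hlawA' : P.map A' = cuspLaw) {ε : ℝ} (hε : 0 ≤ ε)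
    (hε2 : ε ≤ 2) :
    P.real {ω | A ω ∈ Icc 0 (ε / 2)} * P.real {ω | A' ω ∈ Ico (-(ε / 2)) 0} =
      (4 : ℝ) ^ (-(4 : ℝ) / 3) * ε ^ ((2 : ℝ) / 3) := by
  rw [← cuspLaw_real_Icc_mul_cuspLaw_real_Ico hε hε2]
  nth_rw 1 [← hlawA]
  rw [← hlawA', map_measureReal_apply hA measurableSet_Icc,
    map_measureReal_apply hA' measurableSet_Ico]
  rfl

lemma measureReal_mul_le_integral_abs_jumpKernel_sub {Ω : Type*} [MeasurableSpace Ω]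
    {P : Measure Ω} [IsFiniteMeasure P] {A A' : Ω → ℝ} (hA : Measurable A) (hA' : Measurable A')
    (hAA' : IndepFun A A' P) (B : Ω → ℝ) (ε : ℝ) :
    P.real {ω | A ω ∈ Icc 0 (ε / 2)} * P.real {ω | A' ω ∈ Ico (-(ε / 2)) 0} ≤
      ∫ ω, {ω' | |A ω' - A' ω'| ≤ ε}.indicator
        (fun ω' => |jumpKernel (A ω') (B ω') - jumpKernel (A' ω') (B ω')|) ω ∂P := by
  set F : Ω → ℝ := {ω' | |A ω' - A' ω'| ≤ ε}.indicator
    (fun ω' => |jumpKernel (A ω') (B ω') - jumpKernel (A' ω') (B ω')|)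
  have hF_meas : Measurable F := by
    have hF : F = {ω' | |A ω' - A' ω'| ≤ ε}.indicator
        (fun ω' => |(Ici 0).indicator 1 (A ω') - (Ici 0).indicator (1 : ℝ → ℝ) (A' ω')|) := by
      simp only [F, jumpKernel_sub_jumpKernel]
    have hstep : Measurable ((Ici (0 : ℝ)).indicator (1 : ℝ → ℝ)) :=
      measurable_const.indicator measurableSet_Ici
    rw [hF]
    exact ((hstep.comp hA).sub (hstep.comp hA')).abs.indicator
      (measurableSet_le (hA.sub hA').abs measurable_const)
  have hF_nonneg : 0 ≤ F := indicator_nonneg fun _ _ => abs_nonneg _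
  have hF_le_one : ∀ ω, F ω ≤ 1 := fun ω =>
    indicator_apply_le' (fun _ => abs_jumpKernel_sub_le_one _ _ _) (fun _ => zero_le_one)
  have hF_int : Integrable F P :=
    .of_bound hF_meas.aestronglyMeasurable 1 (ae_of_all _ fun ω => by
      rw [Real.norm_eq_abs, abs_of_nonneg (hF_nonneg ω)]; exact hF_le_one ω)
  have hsub : {ω | A ω ∈ Icc 0 (ε / 2)} ∩ {ω | A' ω ∈ Ico (-(ε / 2)) 0} ⊆ {ω | 1 ≤ F ω} := by
    rintro ω ⟨⟨h0, hle⟩, hlo, hneg⟩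
    have hS : |A ω - A' ω| ≤ ε := abs_le.2 ⟨by linarith, by linarith⟩
    simp only [mem_ofPred_eq, F, indicator_of_mem (show ω ∈ {ω' | |A ω' - A' ω'| ≤ ε} from hS),
      abs_jumpKernel_sub_of_nonneg_of_neg h0 hneg, le_refl]
  calc P.real {ω | A ω ∈ Icc 0 (ε / 2)} * P.real {ω | A' ω ∈ Ico (-(ε / 2)) 0}
      = P.real ({ω | A ω ∈ Icc 0 (ε / 2)} ∩ {ω | A' ω ∈ Ico (-(ε / 2)) 0}) := by
        rw [measureReal_def, measureReal_def, measureReal_def, ← ENNReal.toReal_mul]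
        exact congrArg ENNReal.toReal
          (hAA'.measure_inter_preimage_eq_mul _ _ measurableSet_Icc measurableSet_Ico).symm
    _ ≤ P.real {ω | 1 ≤ F ω} := measureReal_mono hsub
    _ ≤ ∫ ω, F ω ∂P := by
        simpa using mul_meas_ge_le_integral_of_nonneg (ae_of_all _ hF_nonneg) hF_int 1

lemma exists_mul_lt_mul_rpow {p : ℝ} (hp : p < 1) {c : ℝ} (hc : 0 < c) (L : ℝ) {δ : ℝ}
    (hδ : 0 < δ) : ∃ ε, 0 < ε ∧ ε ≤ δ ∧ L * ε < c * ε ^ p := by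
  have hlim : Tendsto (fun ε : ℝ => L * ε ^ (1 - p)) (𝓝[>] 0) (𝓝 0) := by
    have := ((Real.continuousAt_rpow_const 0 (1 - p) (Or.inr (by linarith))).tendsto.const_mul
      L).mono_left (nhdsWithin_le_nhds (s := Ioi 0))
    rwa [Real.zero_rpow (by linarith), mul_zero] at this
  obtain ⟨ε, hlt, hpos, hle⟩ :=
    ((hlim.eventually (gt_mem_nhds hc)).and (Ioc_mem_nhdsGT hδ)).exists
  refine ⟨ε, hpos, hle, ?_⟩
  calc L * ε = L * ε ^ (1 - p) * ε ^ p := by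
        rw [mul_assoc, ← Real.rpow_add hpos, sub_add_cancel, Real.rpow_one]
    _ < c * ε ^ p := mul_lt_mul_of_pos_right hlt (Real.rpow_pos_of_pos hpos p)

lemma admissiblePairLaw_of_indepFun {Ω Ω' : Type*} [MeasurableSpace Ω] [MeasurableSpace Ω']
    {P : Measure Ω} {X : ℕ → Ω → ℝ} {P' : Measure Ω'} [IsFiniteMeasure P'] {A B : Ω' → ℝ}
    (hA : Measurable A) (hB : Measurable B) (hAB : IndepFun A B P')
    (hlawA : P'.map A = margLaw P X) (hlawB : P'.map B = margLaw P X) :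
    AdmissiblePairLaw P X (P'.map fun ω => (A ω, B ω)) := by
  right
  rw [(indepFun_iff_map_prod_eq_prod_map_map hA.aemeasurable hB.aemeasurable).1 hAB, hlawA, hlawB]

end

theorem jump_kernel_not_PLipschitz_general
    {Ω : Type*} [MeasurableSpace Ω] (P : Measure Ω) [IsProbabilityMeasure P]
    (A A' B : Ω → ℝ)
    (hA : Measurable A) (hA' : Measurable A')
    (hlawA : P.map A = cuspLaw) (hlawA' : P.map A' = cuspLaw)
    (hindep : iIndepFun ![A, A', B] P) :
    (∀ ε : ℝ, 0 < ε → ε ≤ 2 →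
        (P {ω | A ω ∈ Set.Icc 0 (ε / 2)}).toReal *
            (P {ω | A' ω ∈ Set.Ico (-(ε / 2)) 0}).toReal ≤
          (∫ ω, Set.indicator {ω' | |A ω' - A' ω'| ≤ ε}
              (fun ω' => |jumpKernel (A ω') (B ω') - jumpKernel (A' ω') (B ω')|) ω ∂P) ∧
        (P {ω | A ω ∈ Set.Icc 0 (ε / 2)}).toReal *
            (P {ω | A' ω ∈ Set.Ico (-(ε / 2)) 0}).toReal =
          (4 : ℝ) ^ (-(4 : ℝ) / 3) * ε ^ ((2 : ℝ) / 3)) ∧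
      ∀ (Ω₂ : Type) [MeasurableSpace Ω₂], ∀ (P₂ : Measure Ω₂), IsProbabilityMeasure P₂ →
        ∀ Z : ℕ → Ω₂ → ℝ, (∀ i, Measurable (Z i)) →
          (∀ i, P₂.map (Z i) = cuspLaw) →
          iIndepFun Z P₂ →
          ¬∃ L : ℝ, 0 < L ∧ PLipschitzWith P₂ Z jumpKernel L := by
  refine ⟨fun ε hε hε2 => ⟨?_, ?_⟩, ?_⟩
  · exact measureReal_mul_le_integral_abs_jumpKernel_sub hA hA'
      (by simpa using hindep.indepFun (show (0 : Fin 3) ≠ 1 by decide)) B ε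
  · exact measureReal_mul_measureReal_of_map_eq_cuspLaw hA hA' hlawA hlawA' hε.le hε2
  · rintro Ω₂ _ P₂ hP₂ Z hZ hlaw hZindep ⟨L, -, hLip⟩
    obtain ⟨ε, hε, hε2, hlt⟩ := exists_mul_lt_mul_rpow (p := 2 / 3) (by norm_num)
      (c := (4 : ℝ) ^ (-(4 : ℝ) / 3)) (by positivity) L two_pos
    have hadm12 : AdmissiblePairLaw P₂ Z (P₂.map fun ω => (Z 1 ω, Z 2 ω)) :=
      Or.inl ⟨1, le_rfl, rfl⟩
    have hadm32 : AdmissiblePairLaw P₂ Z (P₂.map fun ω => (Z 3 ω, Z 2 ω)) :=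
      admissiblePairLaw_of_indepFun (hZ 3) (hZ 2) (hZindep.indepFun (by decide))
        ((hlaw 3).trans (hlaw 1).symm) ((hlaw 2).trans (hlaw 1).symm)
    have hlower := measureReal_mul_le_integral_abs_jumpKernel_sub (hZ 1) (hZ 3)
      (hZindep.indepFun (by decide)) (Z 2) ε
    rw [measureReal_mul_measureReal_of_map_eq_cuspLaw (hZ 1) (hZ 3) (hlaw 1) (hlaw 3) hε.le hε2]
      at hlower
    linarith [hLip Ω₂ P₂ (Z 1) (Z 3) (Z 2) hP₂ hadm12 hadm32 ε hε]

/-- for the kernel `h(x,y) = 1_{x≥0} + 1_{y≥0}` and independent `X, X', Y`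
with density `f(t) = (1/6)|t|^{-2/3} 1_{[-1,1]∖{0}}(t)`, the 𝒫-Lipschitz expectation is at
least `4^{-4/3} ε^{2/3}`; consequently `h` is not 𝒫-Lipschitz-continuous for an i.i.d.
sequence with this marginal density. -/
theorem jump_kernel_not_PLipschitz
    {Ω : Type*} [MeasurableSpace Ω] (P : Measure Ω) [IsProbabilityMeasure P]
    (A A' B : Ω → ℝ)
    (hA : Measurable A) (hA' : Measurable A') (hB : Measurable B)
    (hlawA : P.map A = cuspLaw) (hlawA' : P.map A' = cuspLaw) (hlawB : P.map B = cuspLaw)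
    (hindep : iIndepFun ![A, A', B] P) :
    (∀ ε : ℝ, 0 < ε → ε ≤ 2 →
        (P {ω | A ω ∈ Set.Icc 0 (ε / 2)}).toReal *
            (P {ω | A' ω ∈ Set.Ico (-(ε / 2)) 0}).toReal ≤
          (∫ ω, Set.indicator {ω' | |A ω' - A' ω'| ≤ ε}
              (fun ω' => |jumpKernel (A ω') (B ω') - jumpKernel (A' ω') (B ω')|) ω ∂P) ∧
        (P {ω | A ω ∈ Set.Icc 0 (ε / 2)}).toReal *
            (P {ω | A' ω ∈ Set.Ico (-(ε / 2)) 0}).toReal =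
          (4 : ℝ) ^ (-(4 : ℝ) / 3) * ε ^ ((2 : ℝ) / 3)) ∧
      ∀ (Ω₂ : Type) [MeasurableSpace Ω₂], ∀ (P₂ : Measure Ω₂), IsProbabilityMeasure P₂ →
        ∀ Z : ℕ → Ω₂ → ℝ, (∀ i, Measurable (Z i)) →
          (∀ i, P₂.map (Z i) = cuspLaw) →
          iIndepFun Z P₂ →
          ¬∃ L : ℝ, 0 < L ∧ PLipschitzWith P₂ Z jumpKernel L :=
  jump_kernel_not_PLipschitz_general P A A' B hA hA' hlawA hlawA' hindep
end

section
/- Let (X_n)_{n∈ℕ} be a strictly stationary sequence and h a symmetric measurable kernel with ∬|h(x,y)| dF(x)dF(y) < ∞ and E|h(X₁,X_{1+k})| < ∞ for all k∈ℕ₀, so that θ, h₁ and h₂ of the Hoeffding decomposition are well defined. If h is 𝒫-Lipschitz-continuous with constant L, then the degenerate kernel h₂ is 𝒫-Lipschitz-continuous with constant 2L; that is, E[|h₂(X,Y) − h₂(X',Y)| 1_{|X−X'|≤ε}] ≤ 2Lε for every ε>0 and all admissible pairs (X,Y), (X',Y). -/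
open MeasureTheory ProbabilityTheory Filter Asymptotics Real Topology

/-!
Since `h₂(x, y) - h₂(x', y) = (h(x, y) - h(x', y)) - (h₁(x) - h₁(x'))`, it suffices to bound
both differences by `L ε` on `{|X - X'| ≤ ε}`. The first one is the hypothesis. For the second,
`|h₁(x) - h₁(x')| ≤ ∫ |h(x, y) - h(x', y)| dF(y)`, and by Fubini the expectation of the right-hand
side is the Lipschitz quantity of `h` for the pairs `(X, Y)`, `(X', Y)` with `Y ∼ F` independent of
`(X, X')`; both have law `F ⊗ F` because `X` and `X'` are `F`-distributed, so they are admissible.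
-/

section PLipschitz

variable {Ω : Type*} [MeasurableSpace Ω] {P : Measure Ω} {X : ℕ → Ω → ℝ} {h : ℝ → ℝ → ℝ}
  {Ω' : Type*} [MeasurableSpace Ω'] {P' : Measure Ω'}

instance isFiniteMeasure_margLaw [IsFiniteMeasure P] : IsFiniteMeasure (margLaw P X) := by
  unfold margLaw
  infer_instance

lemma isProbabilityMeasure_margLaw [IsProbabilityMeasure P] (hX : AEMeasurable (X 1) P) :
    IsProbabilityMeasure (margLaw P X) :=
  Measure.isProbabilityMeasure_map hX

lemma AdmissiblePairLaw.isProbabilityMeasure [IsProbabilityMeasure P]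
    (hX : ∀ i, AEMeasurable (X i) P) {ν : Measure (ℝ × ℝ)} (hν : AdmissiblePairLaw P X ν) :
    IsProbabilityMeasure ν := by
  have := isProbabilityMeasure_margLaw (hX 1)
  rcases hν with ⟨k, -, rfl⟩ | rfl
  · exact Measure.isProbabilityMeasure_map ((hX 1).prodMk (hX (1 + k)))
  · infer_instance

lemma AdmissiblePairLaw.aemeasurable [IsProbabilityMeasure P] (hX : ∀ i, AEMeasurable (X i) P)
    {C D : Ω' → ℝ} (hCD : AdmissiblePairLaw P X (P'.map fun ω => (C ω, D ω))) :
    AEMeasurable (fun ω => (C ω, D ω)) P' := by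
  by_contra hnot
  have := hCD.isProbabilityMeasure hX
  rw [Measure.map_of_not_aemeasurable hnot] at this
  exact IsProbabilityMeasure.ne_zero (0 : Measure (ℝ × ℝ)) rfl

lemma AdmissiblePairLaw.map_fst [IsProbabilityMeasure P] (hX : ∀ i, AEMeasurable (X i) P)
    {C D : Ω' → ℝ} (hCD : AdmissiblePairLaw P X (P'.map fun ω => (C ω, D ω))) :
    P'.map C = margLaw P X := by
  have := isProbabilityMeasure_margLaw (hX 1)
  have hfst : P'.map C = (P'.map fun ω => (C ω, D ω)).map Prod.fst :=
    (AEMeasurable.map_map_of_aemeasurable measurable_fst.aemeasurable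
      (hCD.aemeasurable hX)).symm
  rcases hCD with ⟨k, -, hlaw⟩ | hlaw
  · rw [hfst, hlaw, AEMeasurable.map_map_of_aemeasurable measurable_fst.aemeasurable
      ((hX 1).prodMk (hX (1 + k)))]
    rfl
  · rw [hfst, hlaw, Measure.map_fst_prod, measure_univ, one_smul]

lemma AdmissiblePairLaw.integrable [IsProbabilityMeasure P] (hX : ∀ i, AEMeasurable (X i) P)
    (hh : Measurable fun p : ℝ × ℝ => h p.1 p.2)
    (hint : Integrable (fun p : ℝ × ℝ => h p.1 p.2) ((margLaw P X).prod (margLaw P X)))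
    (hintk : ∀ k : ℕ, Integrable (fun ω => h (X 1 ω) (X (1 + k) ω)) P)
    {C D : Ω' → ℝ} (hCD : AdmissiblePairLaw P X (P'.map fun ω => (C ω, D ω))) :
    Integrable (fun ω => h (C ω) (D ω)) P' := by
  refine (integrable_map_measure hh.aestronglyMeasurable (hCD.aemeasurable hX)).mp ?_
  rcases hCD with ⟨k, -, hlaw⟩ | hlaw
  · rw [hlaw, integrable_map_measure hh.aestronglyMeasurable ((hX 1).prodMk (hX (1 + k)))]
    exact hintk k
  · rwa [hlaw]

lemma admissiblePairLaw_map_prod [IsProbabilityMeasure P] [SFinite P'] {A : Ω' → ℝ}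
    (hA : Measurable A) (hlaw : P'.map A = margLaw P X) :
    AdmissiblePairLaw P X ((P'.prod (margLaw P X)).map fun q => (A q.1, q.2)) := by
  have hprod := Measure.map_prod_map P' (margLaw P X) hA measurable_id
  rw [Measure.map_id, hlaw] at hprod
  exact Or.inr hprod.symm

lemma PLipschitzWith.of_measurable [IsProbabilityMeasure P] (hX : ∀ i, AEMeasurable (X i) P)
    {k : ℝ → ℝ → ℝ} {L : ℝ}
    (H : ∀ (Ω' : Type) [MeasurableSpace Ω'] (P' : Measure Ω') (A A' B : Ω' → ℝ),
      IsProbabilityMeasure P' → Measurable A → Measurable A' → Measurable B →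
      AdmissiblePairLaw P X (P'.map fun ω' => (A ω', B ω')) →
      AdmissiblePairLaw P X (P'.map fun ω' => (A' ω', B ω')) →
      ∀ ε : ℝ, 0 < ε →
        (∫ ω', Set.indicator {ω'' | |A ω'' - A' ω''| ≤ ε}
          (fun ω'' => |k (A ω'') (B ω'') - k (A' ω'') (B ω'')|) ω' ∂P') ≤ L * ε) :
    PLipschitzWith P X k L := by
  intro Ω' _ P' A A' B hP' hAB hA'B ε hε
  have hpAB := hAB.aemeasurable hX
  have hA : AEMeasurable A P' := measurable_fst.comp_aemeasurable hpAB
  have hA' : AEMeasurable A' P' := measurable_fst.comp_aemeasurable (hA'B.aemeasurable hX)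
  have hB : AEMeasurable B P' := measurable_snd.comp_aemeasurable hpAB
  have eA : A =ᵐ[P'] hA.mk A := hA.ae_eq_mk
  have eA' : A' =ᵐ[P'] hA'.mk A' := hA'.ae_eq_mk
  have eB : B =ᵐ[P'] hB.mk B := hB.ae_eq_mk
  have hAB₀ : AdmissiblePairLaw P X (P'.map fun ω => (hA.mk A ω, hB.mk B ω)) := by
    convert hAB using 1
    exact Measure.map_congr (by filter_upwards [eA, eB] with ω h1 h2; rw [h1, h2])
  have hA'B₀ : AdmissiblePairLaw P X (P'.map fun ω => (hA'.mk A' ω, hB.mk B ω)) := by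
    convert hA'B using 1
    exact Measure.map_congr (by filter_upwards [eA', eB] with ω h1 h2; rw [h1, h2])
  convert H Ω' P' _ _ _ hP' hA.measurable_mk hA'.measurable_mk hB.measurable_mk
    hAB₀ hA'B₀ ε hε using 1
  refine integral_congr_ae ?_
  filter_upwards [eA, eA', eB] with ω h1 h2 h3
  simp only [Set.indicator_apply, Set.mem_ofPred_eq, h1, h2, h3]

lemma integrable_hOne_comp [IsFiniteMeasure P]
    (hint : Integrable (fun p : ℝ × ℝ => h p.1 p.2) ((margLaw P X).prod (margLaw P X)))
    [IsFiniteMeasure P'] {A : Ω' → ℝ} (hA : AEMeasurable A P') (hlaw : P'.map A = margLaw P X) :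
    Integrable (fun ω => hOne P X h (A ω)) P' := by
  have hone : Integrable (hOne P X h) (margLaw P X) :=
    hint.integral_prod_left.sub (integrable_const _)
  rw [← hlaw] at hone
  exact (integrable_map_measure hone.aestronglyMeasurable hA).mp hone

lemma abs_hOne_sub_hOne_le {x x' : ℝ} (hx : Integrable (h x) (margLaw P X))
    (hx' : Integrable (h x') (margLaw P X)) :
    |hOne P X h x - hOne P X h x'| ≤ ∫ y, |h x y - h x' y| ∂(margLaw P X) := by
  have hdiff : hOne P X h x - hOne P X h x' = ∫ y, (h x y - h x' y) ∂(margLaw P X) := by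
    rw [integral_sub hx hx', hOne, hOne, sub_sub_sub_cancel_right]
  rw [hdiff]
  exact abs_integral_le_integral_abs

lemma hTwo_sub_hTwo (x x' y : ℝ) :
    hTwo P X h x y - hTwo P X h x' y =
      (h x y - h x' y) - (hOne P X h x - hOne P X h x') := by
  simp only [hTwo]
  ring

lemma PLipschitzWith.integral_indicator_abs_hOne_sub_le [IsProbabilityMeasure P]
    (hX : ∀ i, AEMeasurable (X i) P) {L : ℝ} (hlip : PLipschitzWith P X h L)
    (hh : Measurable fun p : ℝ × ℝ => h p.1 p.2)
    (hint : Integrable (fun p : ℝ × ℝ => h p.1 p.2) ((margLaw P X).prod (margLaw P X)))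
    (hintk : ∀ k : ℕ, Integrable (fun ω => h (X 1 ω) (X (1 + k) ω)) P)
    {Ω' : Type} [MeasurableSpace Ω'] {P' : Measure Ω'} [IsProbabilityMeasure P']
    {A A' : Ω' → ℝ} (hA : Measurable A) (hA' : Measurable A')
    (hlawA : P'.map A = margLaw P X) (hlawA' : P'.map A' = margLaw P X) {ε : ℝ} (hε : 0 < ε) :
    ∫ ω, Set.indicator {ω | |A ω - A' ω| ≤ ε}
      (fun ω => |hOne P X h (A ω) - hOne P X h (A' ω)|) ω ∂P' ≤ L * ε := by
  have := isProbabilityMeasure_margLaw (hX 1)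
  set ν := margLaw P X
  set T : Set (Ω' × ℝ) := {q | |A q.1 - A' q.1| ≤ ε}
  set F : Ω' × ℝ → ℝ := T.indicator fun q => |h (A q.1) q.2 - h (A' q.1) q.2|
  have hadm := admissiblePairLaw_map_prod (P := P) hA hlawA
  have hadm' := admissiblePairLaw_map_prod (P := P) hA' hlawA'
  have hF : Integrable F (P'.prod ν) :=
    ((hadm.integrable hX hh hint hintk).sub (hadm'.integrable hX hh hint hintk)).abs.indicator
      (measurableSet_le (((hA.comp measurable_fst).sub (hA'.comp measurable_fst)).abs)
        measurable_const)
  have hsection (B : Ω' → ℝ) (hB : Measurable B) (hlaw : P'.map B = ν) :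
      ∀ᵐ ω ∂P', Integrable (h (B ω)) ν :=
    ae_of_ae_map (p := fun x => Integrable (h x) ν) hB.aemeasurable
      (by rw [hlaw]; exact hint.prod_right_ae)
  calc _ ≤ ∫ ω, ∫ y, F (ω, y) ∂ν ∂P' := by
        refine integral_mono_of_nonneg (.of_forall fun ω => Set.indicator_nonneg
          (fun _ _ => abs_nonneg _) ω) hF.integral_prod_left ?_
        filter_upwards [hsection A hA hlawA, hsection A' hA' hlawA'] with ω hAω hA'ω
        by_cases hω : |A ω - A' ω| ≤ ε
        · simpa [F, T, hω] using abs_hOne_sub_hOne_le hAω hA'ω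
        · simpa [hω] using integral_nonneg fun y => Set.indicator_nonneg
            (fun _ _ => abs_nonneg _) (ω, y)
    _ = ∫ q, F q ∂(P'.prod ν) := (integral_prod F hF).symm
    _ ≤ L * ε := hlip _ _ _ _ _ inferInstance hadm hadm' ε hε

end PLipschitz

theorem hTwo_PLipschitz_general
    {Ω : Type*} [MeasurableSpace Ω] (P : Measure Ω) [IsProbabilityMeasure P]
    (X : ℕ → Ω → ℝ) (h : ℝ → ℝ → ℝ)
    (hXmeas : ∀ i, Measurable (X i))
    (hmeas : Measurable fun p : ℝ × ℝ => h p.1 p.2)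
    (hint : Integrable (fun p : ℝ × ℝ => h p.1 p.2) ((margLaw P X).prod (margLaw P X)))
    (hintk : ∀ k : ℕ, Integrable (fun ω => h (X 1 ω) (X (1 + k) ω)) P)
    (L : ℝ) (hlip : PLipschitzWith P X h L) :
    PLipschitzWith P X (hTwo P X h) (2 * L) := by
  have hX : ∀ i, AEMeasurable (X i) P := fun i => (hXmeas i).aemeasurable
  refine PLipschitzWith.of_measurable hX fun Ω' _ P' A A' B hP' hA hA' _ hAB hA'B ε hε => ?_
  set S := {ω | |A ω - A' ω| ≤ ε}
  have hS : MeasurableSet S := measurableSet_le (hA.sub hA').abs measurable_const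
  have hlawA := hAB.map_fst hX
  have hlawA' := hA'B.map_fst hX
  have hone := hlip.integral_indicator_abs_hOne_sub_le hX hmeas hint hintk hA hA' hlawA hlawA' hε
  have hg : Integrable (S.indicator fun ω => |h (A ω) (B ω) - h (A' ω) (B ω)|) P' :=
    ((hAB.integrable hX hmeas hint hintk).sub
      (hA'B.integrable hX hmeas hint hintk)).abs.indicator hS
  have hk : Integrable (S.indicator fun ω => |hOne P X h (A ω) - hOne P X h (A' ω)|) P' :=
    ((integrable_hOne_comp hint hA.aemeasurable hlawA).sub
      (integrable_hOne_comp hint hA'.aemeasurable hlawA')).abs.indicator hS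
  calc _ ≤ ∫ ω, (S.indicator (fun ω => |h (A ω) (B ω) - h (A' ω) (B ω)|) ω +
        S.indicator (fun ω => |hOne P X h (A ω) - hOne P X h (A' ω)|) ω) ∂P' := by
        refine integral_mono_of_nonneg (.of_forall fun ω => Set.indicator_nonneg
          (fun _ _ => abs_nonneg _) ω) (hg.add hk) (.of_forall fun ω => ?_)
        by_cases hω : ω ∈ S
        · simpa only [Set.indicator_of_mem hω, hTwo_sub_hTwo] using abs_sub _ _
        · simp [Set.indicator_of_notMem hω]
    _ = _ := integral_add hg hk
    _ ≤ L * ε + L * ε := add_le_add (hlip Ω' P' A A' B hP' hAB hA'B ε hε) hone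
    _ = 2 * L * ε := by ring

/-- if `h` is 𝒫-Lipschitz-continuous with constant `L`, then the degenerate
kernel `h₂` of the Hoeffding decomposition is 𝒫-Lipschitz-continuous with constant `2L`. -/
theorem hTwo_PLipschitz
    {Ω : Type*} [MeasurableSpace Ω] (P : Measure Ω) [IsProbabilityMeasure P]
    (X : ℕ → Ω → ℝ) (h : ℝ → ℝ → ℝ)
    (hXmeas : ∀ i, Measurable (X i))
    (hmeas : Measurable fun p : ℝ × ℝ => h p.1 p.2)
    (hsymm : ∀ x y, h x y = h y x)
    (hstat : IsStrictlyStationary P X)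
    (hint : Integrable (fun p : ℝ × ℝ => h p.1 p.2) ((margLaw P X).prod (margLaw P X)))
    (hintk : ∀ k : ℕ, Integrable (fun ω => h (X 1 ω) (X (1 + k) ω)) P)
    (L : ℝ) (hL : 0 < L) (hlip : PLipschitzWith P X h L) :
    PLipschitzWith P X (hTwo P X h) (2 * L) :=
  hTwo_PLipschitz_general P X h hXmeas hmeas hint hintk L hlip
end
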